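/- arXiv:1405.4487 — 5 statements merged into one kernel-verified Lean document; each statement's English description precedes it below -/
import Mathlib

section
/- The minimum uplink energy function e_UL is jointly convex: the function (t,s) ↦ e_UL(t,s) is convex on the convex set {(t,s) ∈ ℝ² : t > 0, s ≥ 0}. -/
/-!
Time sharing: if `Q₁` carries `s₁` bits in time `t₁` and `Q₂` carries `s₂` bits in time `t₂`,
then over the time `t = a t₁ + b t₂` the covariance `(a t₁ / t) Q₁ + (b t₂ / t) Q₂` carries at
least `a s₁ + b s₂` bits, because `Q ↦ log det (I + H Q Hᴴ)` is concave, and it costs exactly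
`a e₁ + b e₂`. Hence the sets of feasible energies mix convexly, and so do their infima.
Concavity of `log det` on positive definite matrices reduces, through a congruence `A = Yᴴ Y`,
to the case `A = I`, where it is concavity of `log` applied to each eigenvalue.

For `H = 0` and `s > 0` no `Q` is feasible and `eUL` takes the junk value `sInf ∅ = 0`; this
is harmless because all feasible energies are nonnegative.
-/

open Matrix
open scoped ComplexOrder

/-- Minimum uplink energy: infimum of `k₁ t + k₂ t · Re(Tr Q)` over positive semidefinite
transmit covariance matrices `Q` sustaining `s` bits in time `t` over channel `H` with
bandwidth `W`. -/
noncomputable def eUL {nF nMT : ℕ} (H : Matrix (Fin nF) (Fin nMT) ℂ)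
    (W k1 k2 : ℝ) (t s : ℝ) : ℝ :=
  sInf { e : ℝ | ∃ Q : Matrix (Fin nMT) (Fin nMT) ℂ, Q.PosSemidef ∧
    s ≤ W * t * Real.logb 2 (((1 : Matrix (Fin nF) (Fin nF) ℂ) + H * Q * Hᴴ).det.re) ∧
    e = k1 * t + k2 * t * (Matrix.trace Q).re }

open scoped Pointwise in
theorem convexOn_sInf_of_mul_add_mul_mem {E : Type*} [AddCommMonoid E] [Module ℝ E]
    {D : Set E} {S : E → Set ℝ} (hD : Convex ℝ D) (hS : ∀ p ∈ D, S p ⊆ Set.Ici 0)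
    (hne : ∀ p ∈ D, ∀ q ∈ D, ∀ a b : ℝ, 0 < a → 0 < b → a + b = 1 →
      (S (a • p + b • q)).Nonempty → (S p).Nonempty ∧ (S q).Nonempty)
    (hmix : ∀ p ∈ D, ∀ q ∈ D, ∀ a b : ℝ, 0 < a → 0 < b → a + b = 1 →
      ∀ x ∈ S p, ∀ y ∈ S q, a * x + b * y ∈ S (a • p + b • q)) :
    ConvexOn ℝ D (fun p => sInf (S p)) := by
  refine ⟨hD, fun p hp q hq a b ha hb hab => ?_⟩
  dsimp only
  rcases ha.eq_or_lt with rfl | ha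
  · obtain rfl : b = 1 := by simpa using hab
    simp
  rcases hb.eq_or_lt with rfl | hb
  · obtain rfl : a = 1 := by simpa using hab
    simp
  have hbdd : ∀ r ∈ D, BddBelow (S r) := fun r hr => ⟨0, hS r hr⟩
  by_cases h : (S (a • p + b • q)).Nonempty
  · obtain ⟨hSp, hSq⟩ := hne p hp q hq a b ha hb hab h
    calc sInf (S (a • p + b • q)) ≤ sInf (a • S p + b • S q) := by
          refine csInf_le_csInf (hbdd _ (hD hp hq ha.le hb.le hab))
            (hSp.smul_set.add hSq.smul_set) ?_
          rintro _ ⟨_, ⟨x, hx, rfl⟩, _, ⟨y, hy, rfl⟩, rfl⟩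
          exact hmix p hp q hq a b ha hb hab x hx y hy
      _ = a • sInf (S p) + b • sInf (S q) := by
          rw [csInf_add hSp.smul_set ((hbdd p hp).smul_of_nonneg ha.le) hSq.smul_set
            ((hbdd q hq).smul_of_nonneg hb.le), Real.sInf_smul_of_nonneg ha.le,
            Real.sInf_smul_of_nonneg hb.le]
  · rw [Set.not_nonempty_iff_eq_empty.mp h, Real.sInf_empty]
    exact add_nonneg (smul_nonneg ha.le (Real.sInf_nonneg (hS p hp)))
      (smul_nonneg hb.le (Real.sInf_nonneg (hS q hq)))

namespace Matrix

section Convex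

variable {n 𝕜 : Type*} [RCLike 𝕜]

theorem convex_posSemidef : Convex ℝ {A : Matrix n n 𝕜 | A.PosSemidef} :=
  fun _ hA _ hB _ _ ha hb _ => (hA.smul ha).add (hB.smul hb)

theorem convex_posDef : Convex ℝ {A : Matrix n n 𝕜 | A.PosDef} := by
  intro A hA B hB a b ha hb hab
  rcases ha.eq_or_lt with rfl | ha
  · obtain rfl : b = 1 := by simpa using hab
    simpa using hB
  · exact (hA.smul ha).add_posSemidef (hB.posSemidef.smul hb)

end Convex

variable {m n 𝕜 : Type*} [Fintype m] [DecidableEq m] [Fintype n] [DecidableEq n] [RCLike 𝕜]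

theorem IsHermitian.det_cfc {A : Matrix n n 𝕜} (hA : A.IsHermitian) (f : ℝ → ℝ) :
    (cfc f A).det = ∏ i, (f (hA.eigenvalues i) : 𝕜) := by
  rw [hA.cfc_eq, IsHermitian.cfc, Unitary.conjStarAlgAut_apply, det_mul_comm, ← mul_assoc,
    Unitary.coe_star_mul_self, one_mul, det_diagonal]
  rfl

theorem IsHermitian.re_det_smul_one_add_smul {A : Matrix n n 𝕜} (hA : A.IsHermitian) (a b : ℝ) :
    RCLike.re (a • 1 + b • A).det = ∏ i, (a + b * hA.eigenvalues i) := by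
  have : a • 1 + b • A = cfc (fun x => a + b * x) A := by
    rw [cfc_add _ _ _, cfc_const a A, cfc_const_mul b _ A, cfc_id' ℝ A,
      Algebra.algebraMap_eq_smul_one]
  rw [this, hA.det_cfc, ← RCLike.ofReal_prod, RCLike.ofReal_re]

theorem PosDef.re_det_pos {A : Matrix n n 𝕜} (hA : A.PosDef) : 0 < RCLike.re A.det :=
  (RCLike.pos_iff.mp hA.det_pos).1

theorem re_det_star_mul_mul (Y X : Matrix n n 𝕜) :
    RCLike.re (star Y * X * Y).det = ‖Y.det‖ ^ 2 * RCLike.re X.det := by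
  rw [det_mul, det_mul, mul_comm, ← mul_assoc, star_eq_conjTranspose, det_conjTranspose,
    RCLike.star_def, RCLike.mul_conj, ← RCLike.ofReal_pow, RCLike.re_ofReal_mul]

theorem PosDef.exists_eq_star_mul_mul {B : Matrix n n 𝕜} (hB : B.PosDef) {Y : Matrix n n 𝕜}
    (hY : IsUnit Y) : ∃ C : Matrix n n 𝕜, C.PosDef ∧ B = star Y * C * Y := by
  have hY' : IsUnit Y.det := (isUnit_iff_isUnit_det Y).mp hY
  refine ⟨star Y⁻¹ * B * Y⁻¹,
    hB.conjTranspose_mul_mul_same (mulVec_injective_of_isUnit (isUnit_nonsing_inv_iff.mpr hY)), ?_⟩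
  rw [← Matrix.mul_assoc, ← Matrix.mul_assoc, ← star_mul, nonsing_inv_mul _ hY', star_one,
    Matrix.one_mul]
  exact (nonsing_inv_mul_cancel_right Y B hY').symm

theorem PosDef.mul_log_re_det_le {C : Matrix n n 𝕜} (hC : C.PosDef) {a b : ℝ} (ha : 0 ≤ a)
    (hb : 0 ≤ b) (hab : a + b = 1) :
    b * Real.log (RCLike.re C.det) ≤ Real.log (RCLike.re (a • 1 + b • C).det) := by
  have hpos := hC.eigenvalues_pos
  have hmix : ∀ i, 0 < a + b * hC.1.eigenvalues i := fun i => by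
    simpa using (convex_Ioi (0 : ℝ)) (Set.mem_Ioi.mpr one_pos) (hpos i) ha hb hab
  rw [hC.1.re_det_smul_one_add_smul, hC.1.det_eq_prod_eigenvalues, ← RCLike.ofReal_prod,
    RCLike.ofReal_re, Real.log_prod fun i _ => (hpos i).ne',
    Real.log_prod fun i _ => (hmix i).ne', Finset.mul_sum]
  refine Finset.sum_le_sum fun i _ => ?_
  simpa using strictConcaveOn_log_Ioi.concaveOn.2 (Set.mem_Ioi.mpr one_pos) (hpos i) ha hb hab

open scoped MatrixOrder in
theorem concaveOn_log_re_det :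
    ConcaveOn ℝ {A : Matrix n n 𝕜 | A.PosDef} (fun A => Real.log (RCLike.re A.det)) := by
  refine ⟨convex_posDef, fun A hA B hB a b ha hb hab => ?_⟩
  obtain ⟨Y, hY, rfl⟩ := CStarAlgebra.isStrictlyPositive_iff_eq_star_mul_self.mp
    hA.isStrictlyPositive
  obtain ⟨C, hC, rfl⟩ := hB.exists_eq_star_mul_mul hY
  have hmix : a • (star Y * Y) + b • (star Y * C * Y) = star Y * (a • 1 + b • C) * Y := by
    simp only [Matrix.mul_add, Matrix.add_mul, Matrix.mul_smul, Matrix.smul_mul, Matrix.mul_one]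
  have hA : RCLike.re (star Y * Y).det = ‖Y.det‖ ^ 2 := by simpa using re_det_star_mul_mul Y 1
  have hY0 : ‖Y.det‖ ^ 2 ≠ 0 := by
    have := ((isUnit_iff_isUnit_det Y).mp hY).ne_zero
    positivity
  have hmixC : (a • 1 + b • C).PosDef := convex_posDef PosDef.one hC ha hb hab
  dsimp only [smul_eq_mul]
  rw [hmix, hA, re_det_star_mul_mul, re_det_star_mul_mul, Real.log_mul hY0 hC.re_det_pos.ne',
    Real.log_mul hY0 hmixC.re_det_pos.ne']
  linear_combination hC.mul_log_re_det_le ha hb hab + Real.log (‖Y.det‖ ^ 2) * hab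

omit [DecidableEq n] in
theorem concaveOn_logb_re_det_one_add_mul_mul (H : Matrix m n 𝕜) :
    ConcaveOn ℝ {Q : Matrix n n 𝕜 | Q.PosSemidef}
      (fun Q => Real.logb 2 (RCLike.re (1 + H * Q * Hᴴ).det)) := by
  refine ⟨convex_posSemidef, fun Q₁ hQ₁ Q₂ hQ₂ a b ha hb hab => ?_⟩
  have hPD : ∀ Q : Matrix n n 𝕜, Q.PosSemidef → (1 + H * Q * Hᴴ).PosDef := fun Q hQ =>
    PosDef.one.add_posSemidef (hQ.mul_mul_conjTranspose_same H)
  have hmix : 1 + H * (a • Q₁ + b • Q₂) * Hᴴ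
      = a • (1 + H * Q₁ * Hᴴ) + b • (1 + H * Q₂ * Hᴴ) := by
    rw [smul_add, smul_add, add_add_add_comm, ← add_smul, hab, one_smul, Matrix.mul_add,
      Matrix.add_mul, Matrix.mul_smul, Matrix.mul_smul, Matrix.smul_mul, Matrix.smul_mul]
  have hlog := concaveOn_log_re_det.2 (hPD Q₁ hQ₁) (hPD Q₂ hQ₂) ha hb hab
  dsimp only [smul_eq_mul, Real.logb] at hlog ⊢
  rw [hmix, mul_div_assoc', mul_div_assoc', ← add_div]
  exact div_le_div_of_nonneg_right hlog (Real.log_nonneg one_le_two)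

end Matrix

section UplinkEnergy

variable {nF nMT : ℕ} (H : Matrix (Fin nF) (Fin nMT) ℂ) (W k1 k2 : ℝ)

def eULSet (t s : ℝ) : Set ℝ :=
  { e : ℝ | ∃ Q : Matrix (Fin nMT) (Fin nMT) ℂ, Q.PosSemidef ∧
    s ≤ W * t * Real.logb 2 (((1 : Matrix (Fin nF) (Fin nF) ℂ) + H * Q * Hᴴ).det.re) ∧
    e = k1 * t + k2 * t * (Matrix.trace Q).re }

theorem eUL_eq_sInf_eULSet (t s : ℝ) : eUL H W k1 k2 t s = sInf (eULSet H W k1 k2 t s) := rfl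

theorem eULSet_subset_Ici (hk1 : 0 ≤ k1) (hk2 : 0 ≤ k2) {t : ℝ} (ht : 0 ≤ t) (s : ℝ) :
    eULSet H W k1 k2 t s ⊆ Set.Ici 0 := by
  rintro _ ⟨Q, hQ, -, rfl⟩
  have : 0 ≤ Q.trace.re := (Complex.nonneg_iff.mp hQ.trace_nonneg).1
  exact add_nonneg (mul_nonneg hk1 ht) (mul_nonneg (mul_nonneg hk2 ht) this)

theorem mul_add_mul_mem_eULSet (hW : 0 ≤ W) {t₁ t₂ s₁ s₂ e₁ e₂ a b : ℝ} (ht₁ : 0 < t₁)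
    (ht₂ : 0 < t₂) (ha : 0 < a) (hb : 0 < b)
    (he₁ : e₁ ∈ eULSet H W k1 k2 t₁ s₁) (he₂ : e₂ ∈ eULSet H W k1 k2 t₂ s₂) :
    a * e₁ + b * e₂ ∈ eULSet H W k1 k2 (a * t₁ + b * t₂) (a * s₁ + b * s₂) := by
  obtain ⟨Q₁, hQ₁, hs₁, rfl⟩ := he₁
  obtain ⟨Q₂, hQ₂, hs₂, rfl⟩ := he₂
  set t := a * t₁ + b * t₂
  have ht : 0 < t := by positivity
  have hα : 0 ≤ a * t₁ / t := by positivity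
  have hβ : 0 ≤ b * t₂ / t := by positivity
  have hαβ : a * t₁ / t + b * t₂ / t = 1 := by rw [← add_div, div_self ht.ne']
  refine ⟨(a * t₁ / t) • Q₁ + (b * t₂ / t) • Q₂, convex_posSemidef hQ₁ hQ₂ hα hβ hαβ, ?_, ?_⟩
  · have hR := (concaveOn_logb_re_det_one_add_mul_mul H).2 hQ₁ hQ₂ hα hβ hαβ
    simp only [RCLike.re_to_complex, smul_eq_mul] at hR
    calc a * s₁ + b * s₂
        ≤ a * (W * t₁ * Real.logb 2 (1 + H * Q₁ * Hᴴ).det.re)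
          + b * (W * t₂ * Real.logb 2 (1 + H * Q₂ * Hᴴ).det.re) := by gcongr
      _ = W * t * (a * t₁ / t * Real.logb 2 (1 + H * Q₁ * Hᴴ).det.re
          + b * t₂ / t * Real.logb 2 (1 + H * Q₂ * Hᴴ).det.re) := by field_simp
      _ ≤ _ := by gcongr
  · rw [trace_add, trace_smul, trace_smul, Complex.add_re, Complex.smul_re, Complex.smul_re,
      smul_eq_mul, smul_eq_mul]
    field_simp
    ring

theorem eULSet_nonempty_of_ne_zero (hH : H ≠ 0) (hW : 0 < W) {t : ℝ} (ht : 0 < t) (s : ℝ) :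
    (eULSet H W k1 k2 t s).Nonempty := by
  have hM := posSemidef_self_mul_conjTranspose H
  obtain ⟨j, hj⟩ : ∃ j, hM.1.eigenvalues j ≠ 0 := by
    by_contra! h
    exact hH (self_mul_conjTranspose_eq_zero.mp (hM.1.eigenvalues_eq_zero_iff.mp (funext h)))
  replace hj : 0 < hM.1.eigenvalues j := (hM.eigenvalues_nonneg j).lt_of_ne' hj
  set r := s / (W * t)
  -- `c • 1` reaches the rate `r` through the `j`-th eigenmode alone: `c λⱼ = 2 ^ r`.
  set c := (2 : ℝ) ^ r / hM.1.eigenvalues j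
  have hc : 0 ≤ c := by positivity
  refine ⟨_, c • 1, PosSemidef.one.smul hc, ?_, rfl⟩
  rw [Matrix.mul_smul, Matrix.mul_one, Matrix.smul_mul]
  have hdet : (1 + c • (H * Hᴴ)).det.re = ∏ i, (1 + c * hM.1.eigenvalues i) := by
    simpa using hM.1.re_det_smul_one_add_smul 1 c
  have hterm : ∀ i, 1 ≤ 1 + c * hM.1.eigenvalues i := fun i => by
    have := mul_nonneg hc (hM.eigenvalues_nonneg i); linarith
  have hrate : r ≤ Real.logb 2 (1 + c • (H * Hᴴ)).det.re := by
    calc r = Real.logb 2 (c * hM.1.eigenvalues j) := by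
          rw [div_mul_cancel₀ _ hj.ne', Real.logb_rpow two_pos (by norm_num)]
      _ ≤ Real.logb 2 (1 + c * hM.1.eigenvalues j) :=
          Real.logb_le_logb_of_le one_lt_two (by positivity) (by linarith)
      _ ≤ ∑ i, Real.logb 2 (1 + c * hM.1.eigenvalues i) :=
          Finset.single_le_sum (fun i _ => Real.logb_nonneg one_lt_two (hterm i))
            (Finset.mem_univ j)
      _ = _ := by
          rw [hdet, Real.logb_prod _ _ fun i _ => (zero_lt_one.trans_le (hterm i)).ne']
  calc s = W * t * r := (mul_div_cancel₀ s (by positivity)).symm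
    _ ≤ _ := by gcongr

theorem eULSet_nonempty_iff (hW : 0 < W) {t : ℝ} (ht : 0 < t) (s : ℝ) :
    (eULSet H W k1 k2 t s).Nonempty ↔ H ≠ 0 ∨ s ≤ 0 := by
  refine ⟨?_, ?_⟩
  · rintro ⟨_, Q, -, hs, -⟩
    by_contra! h
    obtain ⟨rfl, hs0⟩ := h
    simp only [Matrix.zero_mul, add_zero, det_one, Complex.one_re, Real.logb_one, mul_zero] at hs
    linarith
  · rintro (hH | hs)
    · exact eULSet_nonempty_of_ne_zero H W k1 k2 hH hW ht s
    · exact ⟨_, 0, .zero, by simpa using hs, rfl⟩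

end UplinkEnergy

/-- The minimum uplink energy function `(t,s) ↦ e_UL(t,s)` is jointly convex on
`{(t,s) : t > 0, s ≥ 0}`. -/
theorem eUL_convexOn (nF nMT : ℕ) (H : Matrix (Fin nF) (Fin nMT) ℂ)
    (W k1 k2 : ℝ) (hW : 0 < W) (hk1 : 0 ≤ k1) (hk2 : 0 < k2) :
    ConvexOn ℝ {p : ℝ × ℝ | 0 < p.1 ∧ 0 ≤ p.2}
      (fun p : ℝ × ℝ => eUL H W k1 k2 p.1 p.2) := by
  simp_rw [eUL_eq_sInf_eULSet]
  refine convexOn_sInf_of_mul_add_mul_mem ((convex_Ioi 0).prod (convex_Ici 0)) ?_ ?_ ?_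
  · rintro ⟨t, s⟩ ⟨ht, -⟩
    exact eULSet_subset_Ici H W k1 k2 hk1 hk2.le ht.le s
  · rintro ⟨t₁, s₁⟩ ⟨ht₁, hs₁⟩ ⟨t₂, s₂⟩ ⟨ht₂, hs₂⟩ a b ha hb -
    have ht : 0 < a * t₁ + b * t₂ := by positivity
    simp only [Prod.smul_mk, Prod.mk_add_mk, smul_eq_mul, eULSet_nonempty_iff H W k1 k2 hW ht,
      eULSet_nonempty_iff H W k1 k2 hW ht₁, eULSet_nonempty_iff H W k1 k2 hW ht₂]
    rintro (hH | hs)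
    · exact ⟨.inl hH, .inl hH⟩
    · constructor <;> right <;> nlinarith
  · rintro ⟨t₁, s₁⟩ ⟨ht₁, -⟩ ⟨t₂, s₂⟩ ⟨ht₂, -⟩ a b ha hb - e₁ he₁ e₂ he₂
    exact mul_add_mul_mem_eULSet H W k1 k2 hW.le ht₁ ht₂ ha hb he₁ he₂
end

section
/- Optimality of water-filling for power minimization: let K ≥ 1, let λ : Fin K → ℝ with λ_i > 0 for all i, let c > 0, and define p_i = max(c − 1/λ_i, 0). Suppose R = Σᵢ log₂(1 + λ_i·p_i). Then for every q : Fin K → ℝ with q_i ≥ 0 for all i and Σᵢ log₂(1 + λ_i·q_i) ≥ R, one has Σᵢ p_i ≤ Σᵢ q_i. -/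
/-- Optimality of water-filling for power minimization: the water-filling allocation
`pᵢ = max(c − 1/λᵢ, 0)` minimizes total power among all nonnegative allocations `q`
achieving the rate `R = Σᵢ log₂(1 + λᵢ pᵢ)`. -/
theorem waterfilling_min_power (K : ℕ) (hK : 1 ≤ K)
    (lam : Fin K → ℝ) (hlam : ∀ i, 0 < lam i) (c : ℝ) (hc : 0 < c)
    (p : Fin K → ℝ) (hp : ∀ i, p i = max (c - 1 / lam i) 0)
    (R : ℝ) (hR : R = ∑ i, Real.logb 2 (1 + lam i * p i))
    (q : Fin K → ℝ) (hq : ∀ i, 0 ≤ q i)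
    (hqR : R ≤ ∑ i, Real.logb 2 (1 + lam i * q i)) :
    ∑ i, p i ≤ ∑ i, q i := by
  have key : ∀ i, p i - q i ≤
      c * (Real.log (1 + lam i * p i) - Real.log (1 + lam i * q i)) := by
    intro i
    have hL := hlam i
    have hqi := hq i
    have h1q : 0 < 1 + lam i * q i := by nlinarith
    rcases le_or_gt (c - 1 / lam i) 0 with hcase | hcase
    · have hpi : p i = 0 := by rw [hp i]; exact max_eq_right hcase
      rw [hpi]
      have hlog : Real.log (1 + lam i * q i) ≤ lam i * q i := by
        have := Real.log_le_sub_one_of_pos h1q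
        linarith
      have hcl : c * lam i ≤ 1 := by
        have : c ≤ 1 / lam i := by linarith
        rw [div_eq_inv_mul] at this
        calc c * lam i ≤ (lam i)⁻¹ * 1 * lam i := by nlinarith
          _ = 1 := by field_simp
      have hlog0 : 0 ≤ Real.log (1 + lam i * q i) := by
        apply Real.log_nonneg; nlinarith
      have : c * Real.log (1 + lam i * q i) ≤ c * (lam i * q i) := by
        nlinarith
      have h2 : c * (lam i * q i) ≤ q i := by nlinarith
      simp only [mul_zero, add_zero, Real.log_one]
      nlinarith
    · have hpi : p i = c - 1 / lam i := by rw [hp i]; exact max_eq_left hcase.le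
      have hLc : 1 + lam i * p i = lam i * c := by
        rw [hpi]; field_simp; ring
      rw [hLc]
      have hLc0 : 0 < lam i * c := by positivity
      have hx : 0 < (1 + lam i * q i) / (lam i * c) := by positivity
      have hlog := Real.log_le_sub_one_of_pos hx
      rw [Real.log_div (ne_of_gt h1q) (ne_of_gt hLc0)] at hlog
      -- hlog : log(1+λq) - log(λc) ≤ (1+λq)/(λc) - 1
      have hdiv : (1 + lam i * q i) / (lam i * c) - 1
          = (1 + lam i * q i - lam i * c) / (lam i * c) := by
        field_simp
      rw [hdiv] at hlog
      have hmul : c * (Real.log (1 + lam i * q i) - Real.log (lam i * c))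
          ≤ c * ((1 + lam i * q i - lam i * c) / (lam i * c)) := by
        have := hc.le
        nlinarith [mul_le_mul_of_nonneg_left hlog hc.le]
      have hsimp : c * ((1 + lam i * q i - lam i * c) / (lam i * c))
          = (1 / lam i + q i - c) := by
        field_simp
      rw [hsimp] at hmul
      have : -(c * (Real.log (lam i * c) - Real.log (1 + lam i * q i)))
          ≤ 1 / lam i + q i - c := by linarith [hmul]
      rw [hpi]; linarith
  have hsum : ∑ i, (p i - q i) ≤
      c * ((∑ i, Real.log (1 + lam i * p i)) - ∑ i, Real.log (1 + lam i * q i)) := by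
    calc ∑ i, (p i - q i)
        ≤ ∑ i, c * (Real.log (1 + lam i * p i) - Real.log (1 + lam i * q i)) :=
          Finset.sum_le_sum fun i _ => key i
      _ = _ := by rw [← Finset.mul_sum, Finset.sum_sub_distrib]
  have hlb : ∀ f : Fin K → ℝ, ∑ i, Real.log (1 + lam i * f i)
      = Real.log 2 * ∑ i, Real.logb 2 (1 + lam i * f i) := by
    intro f
    rw [Finset.mul_sum]
    refine Finset.sum_congr rfl fun i _ => ?_
    rw [Real.logb]
    field_simp
  have hlog2 : 0 < Real.log 2 := Real.log_pos (by norm_num)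
  have hRle : (∑ i, Real.log (1 + lam i * p i)) - ∑ i, Real.log (1 + lam i * q i) ≤ 0 := by
    rw [hlb p, hlb q]
    have : (∑ i, Real.logb 2 (1 + lam i * p i)) ≤ ∑ i, Real.logb 2 (1 + lam i * q i) := by
      rw [← hR]; exact hqR
    nlinarith
  have : ∑ i, (p i - q i) ≤ 0 := le_trans hsum (by nlinarith)
  rw [Finset.sum_sub_distrib] at this
  linarith
end

section
/- Optimality of water-filling for rate maximization (downlink): let K ≥ 1, let λ : Fin K → ℝ with λ_i > 0 for all i, let μ > 0, define p_i = max(μ − 1/λ_i, 0), and suppose Σᵢ p_i = P. Then for every q : Fin K → ℝ with q_i ≥ 0 for all i and Σᵢ q_i ≤ P, one has Σᵢ log₂(1 + λ_i·q_i) ≤ Σᵢ log₂(1 + λ_i·p_i). -/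
/-- Optimality of water-filling for rate maximization (downlink): the water-filling
allocation `pᵢ = max(μ − 1/λᵢ, 0)` with total power `P` achieves the maximum rate among
all nonnegative allocations `q` with total power at most `P`. -/
theorem waterfilling_max_rate (K : ℕ) (hK : 1 ≤ K)
    (lam : Fin K → ℝ) (hlam : ∀ i, 0 < lam i) (μ : ℝ) (hμ : 0 < μ)
    (p : Fin K → ℝ) (hp : ∀ i, p i = max (μ - 1 / lam i) 0)
    (P : ℝ) (hP : ∑ i, p i = P)
    (q : Fin K → ℝ) (hq : ∀ i, 0 ≤ q i) (hqP : ∑ i, q i ≤ P) :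
    ∑ i, Real.logb 2 (1 + lam i * q i) ≤ ∑ i, Real.logb 2 (1 + lam i * p i) := by
  have hp0 : ∀ i, 0 ≤ p i := fun i => (hp i) ▸ le_max_right _ _
  have ha : ∀ i, 0 < 1 + lam i * p i := fun i =>
    add_pos_of_pos_of_nonneg one_pos (mul_nonneg (hlam i).le (hp0 i))
  have hb : ∀ i, 0 < 1 + lam i * q i := fun i =>
    add_pos_of_pos_of_nonneg one_pos (mul_nonneg (hlam i).le (hq i))
  -- key per-index bound
  have key : ∀ i, Real.log (1 + lam i * q i) - Real.log (1 + lam i * p i)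
      ≤ (q i - p i) / μ := by
    intro i
    have h1 : Real.log (1 + lam i * q i) - Real.log (1 + lam i * p i)
        ≤ (1 + lam i * q i) / (1 + lam i * p i) - 1 := by
      have := Real.log_le_sub_one_of_pos (div_pos (hb i) (ha i))
      rwa [Real.log_div (hb i).ne' (ha i).ne'] at this
    have h2 : (1 + lam i * q i) / (1 + lam i * p i) - 1
        = lam i * (q i - p i) / (1 + lam i * p i) := by
      rw [eq_div_iff (ha i).ne', sub_mul, one_mul, div_mul_cancel₀ _ (ha i).ne']
      ring
    refine h1.trans ?_
    rw [h2]
    rcases le_or_gt (μ - 1 / lam i) 0 with hc | hc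
    · -- p i = 0, lam i ≤ 1/μ
      have hpi : p i = 0 := by rw [hp i, max_eq_right hc]
      have hlm : lam i * μ ≤ 1 := by
        have : μ ≤ 1 / lam i := by linarith
        calc lam i * μ ≤ lam i * (1 / lam i) :=
              mul_le_mul_of_nonneg_left this (hlam i).le
          _ = 1 := mul_one_div_cancel (hlam i).ne'
      simp only [hpi, mul_zero, add_zero, sub_zero, div_one]
      rw [le_div_iff₀ hμ]
      nlinarith [hq i]
    · -- p i = μ - 1/lam i
      have hpi : p i = μ - 1 / lam i := by rw [hp i, max_eq_left hc.le]
      have hli : 1 + lam i * p i = lam i * μ := by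
        rw [hpi, mul_sub, mul_one_div_cancel (hlam i).ne']; ring
      rw [hli, mul_div_mul_left _ _ (hlam i).ne']
  have hsum : ∑ i, Real.log (1 + lam i * q i) ≤ ∑ i, Real.log (1 + lam i * p i) := by
    have h1 : ∑ i, (Real.log (1 + lam i * q i) - Real.log (1 + lam i * p i))
        ≤ ∑ i, (q i - p i) / μ := Finset.sum_le_sum fun i _ => key i
    have h2 : ∑ i, (q i - p i) / μ ≤ 0 := by
      rw [← Finset.sum_div, Finset.sum_sub_distrib, hP]
      exact div_nonpos_of_nonpos_of_nonneg (by linarith) hμ.le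
    have := h1.trans h2
    rw [Finset.sum_sub_distrib] at this
    linarith
  simp only [Real.logb, ← Finset.sum_div]
  gcongr
end

section
/- Feasibility of the offloading problem is equivalent to the latency exceeding the minimum affordable latency: let S > 0, τ₀ > 0 and A > 0 be reals and L ≥ 0. Then max(0, S − L/τ₀) ≤ min(S, L/A) if and only if L ≥ S·τ₀·A/(τ₀ + A). -/
/-- Feasibility of the offloading problem is equivalent to the latency exceeding the minimum
affordable latency: `max(0, S − L/τ₀) ≤ min(S, L/A)` iff `L ≥ S τ₀ A / (τ₀ + A)`. -/
theorem offloading_feasibility_iff (S τ₀ A L : ℝ)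
    (hS : 0 < S) (hτ : 0 < τ₀) (hA : 0 < A) (hL : 0 ≤ L) :
    max 0 (S - L / τ₀) ≤ min S (L / A) ↔ S * τ₀ * A / (τ₀ + A) ≤ L := by
  have hτA : 0 < τ₀ + A := by linarith
  rw [max_le_iff, le_min_iff, le_min_iff, div_le_iff₀ hτA]
  constructor
  · rintro ⟨⟨_, _⟩, _, h⟩
    rw [sub_le_iff_le_add, div_add_div _ _ (ne_of_gt hA) (ne_of_gt hτ), le_div_iff₀ (by positivity)] at h
    nlinarith
  · intro h
    refine ⟨⟨le_of_lt hS, by positivity⟩, by nlinarith [div_nonneg hL hτ.le], ?_⟩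
    rw [sub_le_iff_le_add, div_add_div _ _ (ne_of_gt hA) (ne_of_gt hτ), le_div_iff₀ (by positivity)]
    nlinarith
end

section
/- Without a latency constraint, partial offloading is never optimal: with the notation of the context, the infimum, over all S₁ ∈ [0, S_app], t_UL > 0 with β_UL·S₁ ≤ t_UL·R_UL^max, and t_DL ≥ β_DL·S₁/R_DL^max, of the total energy e_UL(t_UL, β_UL·S₁) + ε₀·(S_app − S₁) + k_{rx,1}·t_DL + k_{rx,2}·β_DL·S₁ equals S_app·min(ε₀, δ), where δ := β_UL·ē_min + k_{rx,1}·β_DL/R_DL^max + k_{rx,2}·β_DL and ē_min := inf{ e_UL(1/r, 1) : 0 < r ≤ R_UL^max }. In particular the infimum equals the smaller of the value of processing all bits locally (ε₀·S_app) and the infimal value of offloading all bits (δ·S_app). -/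
/-!
Uplink energy is positively homogeneous: `e_UL(c t, c s) = c · e_UL(t, s)`. Sending `s` bits in
time `t` therefore costs `s · e_UL(1/r, 1)` with rate `r = s / t`, which is at least `s · ē_min`,
and this bound is approached by choosing a near-optimal rate. The total energy of offloading
`S₁` bits is thus bounded below by `ε₀ (S_app - S₁) + δ S₁`, an affine function of `S₁` that is
minimised at an endpoint. Both endpoint values are approached: local processing by sending
nothing in a vanishingly short uplink slot, full offloading by the near-optimal rate.
-/

open Matrix
open scoped ComplexOrder

lemma mul_min_le_sub_mul_add_mul {S x : ℝ} (a b : ℝ) (hx : 0 ≤ x) (hxS : x ≤ S) :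
    S * min a b ≤ a * (S - x) + b * x := by
  have ha : min a b * (S - x) ≤ a * (S - x) :=
    mul_le_mul_of_nonneg_right (min_le_left a b) (sub_nonneg.2 hxS)
  have hb : min a b * x ≤ b * x := mul_le_mul_of_nonneg_right (min_le_right a b) hx
  linarith

lemma uplink_energy_nonneg {n : ℕ} {k1 k2 t : ℝ} (hk1 : 0 ≤ k1) (hk2 : 0 ≤ k2) (ht : 0 ≤ t)
    {Q : Matrix (Fin n) (Fin n) ℂ} (hQ : Q.PosSemidef) :
    0 ≤ k1 * t + k2 * t * (trace Q).re := by
  have := (Complex.nonneg_iff.1 hQ.trace_nonneg).1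
  positivity

section UplinkEnergy

variable {nF nMT : ℕ} (H : Matrix (Fin nF) (Fin nMT) ℂ) (W k1 k2 : ℝ)

lemma eUL_nonneg (hk1 : 0 ≤ k1) (hk2 : 0 ≤ k2) {t : ℝ} (ht : 0 ≤ t) (s : ℝ) :
    0 ≤ eUL H W k1 k2 t s :=
  Real.sInf_nonneg <| by
    rintro _ ⟨Q, hQ, -, rfl⟩
    exact uplink_energy_nonneg hk1 hk2 ht hQ

lemma eUL_le_of_nonpos (hk1 : 0 ≤ k1) (hk2 : 0 ≤ k2) {t s : ℝ} (ht : 0 ≤ t) (hs : s ≤ 0) :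
    eUL H W k1 k2 t s ≤ k1 * t := by
  refine csInf_le ⟨0, ?_⟩ ⟨0, PosSemidef.zero, by simpa using hs, by simp⟩
  rintro _ ⟨Q, hQ, -, rfl⟩
  exact uplink_energy_nonneg hk1 hk2 ht hQ

lemma eUL_mul_mul {c : ℝ} (hc : 0 < c) (t s : ℝ) :
    eUL H W k1 k2 (c * t) (c * s) = c * eUL H W k1 k2 t s := by
  simp only [eUL]
  rw [← smul_eq_mul c (sInf _), ← Real.sInf_smul_of_nonneg hc.le]
  congr 1
  ext e
  simp only [Set.mem_smul_set, Set.mem_ofPred_eq, smul_eq_mul]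
  constructor
  · rintro ⟨Q, hQ, hs, rfl⟩
    refine ⟨_, ⟨Q, hQ, le_of_mul_le_mul_left ?_ hc, rfl⟩, by ring⟩
    linarith
  · rintro ⟨_, ⟨Q, hQ, hs, rfl⟩, rfl⟩
    refine ⟨Q, hQ, ?_, by ring⟩
    nlinarith

lemma eUL_eq_mul_eUL_inv_rate {s : ℝ} (hs : 0 < s) (t : ℝ) :
    eUL H W k1 k2 t s = s * eUL H W k1 k2 (1 / (s / t)) 1 := by
  rw [← eUL_mul_mul H W k1 k2 hs, mul_one, mul_one_div, div_div_cancel₀ hs.ne']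

/-- The paper's `ē_min` for maximal uplink rate `R`. -/
noncomputable def minEnergyPerBit (R : ℝ) : ℝ :=
  sInf {e : ℝ | ∃ r : ℝ, 0 < r ∧ r ≤ R ∧ e = eUL H W k1 k2 (1 / r) 1}

lemma mul_minEnergyPerBit_le_eUL (hk1 : 0 ≤ k1) (hk2 : 0 ≤ k2) {R t s : ℝ} (ht : 0 < t)
    (hs : 0 ≤ s) (hsR : s ≤ t * R) :
    s * minEnergyPerBit H W k1 k2 R ≤ eUL H W k1 k2 t s := by
  rcases hs.eq_or_lt with rfl | hs
  · simpa using eUL_nonneg H W k1 k2 hk1 hk2 ht.le 0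
  have hbdd : BddBelow {e : ℝ | ∃ r : ℝ, 0 < r ∧ r ≤ R ∧ e = eUL H W k1 k2 (1 / r) 1} := by
    refine ⟨0, ?_⟩
    rintro _ ⟨r, hr, -, rfl⟩
    exact eUL_nonneg H W k1 k2 hk1 hk2 (by positivity) 1
  have hrate : s / t ≤ R := (div_le_iff₀ ht).2 (by linarith)
  rw [eUL_eq_mul_eUL_inv_rate H W k1 k2 hs]
  exact mul_le_mul_of_nonneg_left (csInf_le hbdd ⟨s / t, div_pos hs ht, hrate, rfl⟩) hs.le

lemma exists_eUL_lt_mul_minEnergyPerBit_add {R s η : ℝ} (hR : 0 < R) (hs : 0 < s)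
    (hη : 0 < η) :
    ∃ t, 0 < t ∧ s ≤ t * R ∧ eUL H W k1 k2 t s < s * minEnergyPerBit H W k1 k2 R + η := by
  have hne : {e : ℝ | ∃ r : ℝ, 0 < r ∧ r ≤ R ∧ e = eUL H W k1 k2 (1 / r) 1}.Nonempty :=
    ⟨_, R, hR, le_rfl, rfl⟩
  obtain ⟨_, ⟨r, hr, hrR, rfl⟩, hlt⟩ := Real.lt_sInf_add_pos hne (div_pos hη hs)
  have ht : 0 < s / r := div_pos hs hr
  refine ⟨s / r, ht, ?_, ?_⟩
  · rw [div_mul_eq_mul_div, le_div_iff₀ hr]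
    exact mul_le_mul_of_nonneg_left hrR hs.le
  · rw [eUL_eq_mul_eUL_inv_rate H W k1 k2 hs, div_div_cancel₀ hs.ne']
    calc s * eUL H W k1 k2 (1 / r) 1 < s * (minEnergyPerBit H W k1 k2 R + η / s) :=
          mul_lt_mul_of_pos_left hlt hs
      _ = s * minEnergyPerBit H W k1 k2 R + η := by field_simp

lemma exists_eUL_zero_lt (hk1 : 0 ≤ k1) (hk2 : 0 ≤ k2) {η : ℝ} (hη : 0 < η) :
    ∃ t, 0 < t ∧ eUL H W k1 k2 t 0 < η := by
  refine ⟨η / (k1 + 1), by positivity, ?_⟩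
  calc eUL H W k1 k2 (η / (k1 + 1)) 0 ≤ k1 * (η / (k1 + 1)) :=
        eUL_le_of_nonpos H W k1 k2 hk1 hk2 (by positivity) le_rfl
    _ < η := by
      rw [mul_div_assoc', div_lt_iff₀ (by positivity)]
      nlinarith

end UplinkEnergy

theorem no_latency_partial_offloading_never_optimal_general
    (nF nMT : ℕ) (H : Matrix (Fin nF) (Fin nMT) ℂ)
    (W k1 k2 Sapp ε₀ βUL βDL RUL RDL krx1 krx2 : ℝ)
    (hk1 : 0 ≤ k1) (hk2 : 0 < k2)
    (hSapp : 0 < Sapp) (hβUL : 1 ≤ βUL)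
    (hRUL : 0 < RUL) (hkrx1 : 0 ≤ krx1)
    (emin δ : ℝ)
    (hemin : emin = sInf { e : ℝ | ∃ r : ℝ, 0 < r ∧ r ≤ RUL ∧ e = eUL H W k1 k2 (1 / r) 1 })
    (hδ : δ = βUL * emin + krx1 * βDL / RDL + krx2 * βDL) :
    sInf { e : ℝ | ∃ S₁ tUL tDL : ℝ, 0 ≤ S₁ ∧ S₁ ≤ Sapp ∧ 0 < tUL ∧
        βUL * S₁ ≤ tUL * RUL ∧ βDL * S₁ / RDL ≤ tDL ∧
        e = eUL H W k1 k2 tUL (βUL * S₁) + ε₀ * (Sapp - S₁) + krx1 * tDL +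
          krx2 * (βDL * S₁) } = Sapp * min ε₀ δ := by
  have hβUL₀ : 0 < βUL := by linarith
  change emin = minEnergyPerBit H W k1 k2 RUL at hemin
  apply csInf_eq_of_forall_ge_of_forall_gt_exists_lt
  · exact ⟨_, 0, 1, 0, le_rfl, hSapp.le, one_pos, by simpa using hRUL.le, by simp, rfl⟩
  · rintro _ ⟨S₁, tUL, tDL, hS₁, hS₁Sapp, htUL, hUL, hDL, rfl⟩
    have hup := mul_minEnergyPerBit_le_eUL H W k1 k2 hk1 hk2.le htUL (by positivity) hUL
    have hdown := mul_le_mul_of_nonneg_left hDL hkrx1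
    have hsplit := mul_min_le_sub_mul_add_mul ε₀ δ hS₁ hS₁Sapp
    have hδS₁ : δ * S₁ = βUL * S₁ * emin + krx1 * (βDL * S₁ / RDL) + krx2 * (βDL * S₁) := by
      rw [hδ]; ring
    rw [← hemin] at hup
    linarith
  · intro w hw
    rw [mul_min_of_nonneg _ _ hSapp.le, min_lt_iff] at hw
    rcases hw with hlocal | hoffload
    · obtain ⟨t, ht, hlt⟩ := exists_eUL_zero_lt H W k1 k2 hk1 hk2.le (sub_pos.2 hlocal)
      refine ⟨_, ⟨0, t, 0, le_rfl, hSapp.le, ht, by rw [mul_zero]; positivity, by simp, rfl⟩, ?_⟩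
      simp only [mul_zero, sub_zero, add_zero]
      linarith
    · obtain ⟨t, ht, hUL, hlt⟩ := exists_eUL_lt_mul_minEnergyPerBit_add H W k1 k2 hRUL
        (by positivity : 0 < βUL * Sapp) (sub_pos.2 hoffload)
      refine ⟨_, ⟨Sapp, t, βDL * Sapp / RDL, hSapp.le, le_rfl, ht, hUL, le_rfl, rfl⟩, ?_⟩
      have hδSapp : Sapp * δ = βUL * Sapp * emin + krx1 * (βDL * Sapp / RDL) +
          krx2 * (βDL * Sapp) := by
        rw [hδ]; ring
      rw [← hemin] at hlt
      linarith

/-- Without a latency constraint, partial offloading is never optimal: the infimal total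
energy over all partitions `S₁ ∈ [0, S_app]` and feasible transmission times equals
`S_app · min(ε₀, δ)`, where `δ = β_UL · ē_min + k_rx1 β_DL / R_DL + k_rx2 β_DL` and
`ē_min = inf { e_UL(1/r, 1) : 0 < r ≤ R_UL^max }`. -/
theorem no_latency_partial_offloading_never_optimal
    (nF nMT : ℕ) (H : Matrix (Fin nF) (Fin nMT) ℂ)
    (W k1 k2 Sapp ε₀ βUL βDL RUL RDL krx1 krx2 : ℝ)
    (hW : 0 < W) (hk1 : 0 ≤ k1) (hk2 : 0 < k2)
    (hSapp : 0 < Sapp) (hε₀ : 0 < ε₀) (hβUL : 1 ≤ βUL) (hβDL : 0 < βDL)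
    (hRUL : 0 < RUL) (hRDL : 0 < RDL) (hkrx1 : 0 ≤ krx1) (hkrx2 : 0 ≤ krx2)
    (emin δ : ℝ)
    (hemin : emin = sInf { e : ℝ | ∃ r : ℝ, 0 < r ∧ r ≤ RUL ∧ e = eUL H W k1 k2 (1 / r) 1 })
    (hδ : δ = βUL * emin + krx1 * βDL / RDL + krx2 * βDL) :
    sInf { e : ℝ | ∃ S₁ tUL tDL : ℝ, 0 ≤ S₁ ∧ S₁ ≤ Sapp ∧ 0 < tUL ∧
        βUL * S₁ ≤ tUL * RUL ∧ βDL * S₁ / RDL ≤ tDL ∧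
        e = eUL H W k1 k2 tUL (βUL * S₁) + ε₀ * (Sapp - S₁) + krx1 * tDL +
          krx2 * (βDL * S₁) } = Sapp * min ε₀ δ :=
  no_latency_partial_offloading_never_optimal_general nF nMT H W k1 k2 Sapp ε₀ βUL βDL RUL RDL krx1
    krx2 hk1 hk2 hSapp hβUL hRUL hkrx1 emin δ hemin hδ
end
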